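/- For every stream s: if the set Reds s of red positions of s is streamless, then s is not infinitely often red, i.e., ¬ rep s. -/

import Mathlib

/-- The suffix of a stream at position `n`. -/
def suff (s : ℕ → Bool) (n : ℕ) : ℕ → Bool := fun k => s (n + k)

/-- The weak-until predicate transformer (greatest fixed point, impredicative). -/
def W (X : (ℕ → Bool) → Prop) (s : ℕ → Bool) : Prop :=
  ∃ Y : (ℕ → Bool) → Prop, Y s ∧
    ∀ t, Y t → (t 0 = true → X (suff t 1)) ∧ (t 0 = false → Y (suff t 1))

/-- A stream is almost always blue: least fixed point of `W`. -/
def pre (s : ℕ → Bool) : Prop :=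
  ∀ P : (ℕ → Bool) → Prop, (∀ t, W P t → P t) → P s

/-- The strong-until predicate transformer (inductive). -/
inductive U (X : (ℕ → Bool) → Prop) : (ℕ → Bool) → Prop
  | red : ∀ t, t 0 = true → X (suff t 1) → U X t
  | blue : ∀ t, t 0 = false → U X (suff t 1) → U X t

/-- A stream is infinitely often red: greatest fixed point of `U`. -/
def rep (s : ℕ → Bool) : Prop :=
  ∃ P : (ℕ → Bool) → Prop, P s ∧ ∀ t, P t → U P t

/-- `succs s n m` : `m` is the position following the first red position at or after `n`. -/
def succs (s : ℕ → Bool) (n m : ℕ) : Prop :=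
  ∃ l, n ≤ l ∧ (∀ k, n ≤ k → k < l → s k = false) ∧ s l = true ∧ m = l + 1

/-- The set of red positions of a stream. -/
def Reds (s : ℕ → Bool) : Set ℕ := {n | s n = true}

/-- The set of blue positions of a stream. -/
def Blues (s : ℕ → Bool) : Set ℕ := {n | s n = false}

/-- A colist is duplicate-free over `A`: entries lie in `A` and entries at
distinct positions are distinct. -/
def DupFree (l : Stream'.Seq ℕ) (A : Set ℕ) : Prop :=
  (∀ n x, l.get? n = some x → x ∈ A) ∧
  (∀ m n x y, m ≠ n → l.get? m = some x → l.get? n = some y → x ≠ y)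

/-- A set of naturals is streamless if every duplicate-free colist over it is finite. -/
def Streamless (A : Set ℕ) : Prop :=
  ∀ l : Stream'.Seq ℕ, DupFree l A → l.Terminates

/-- A set of naturals is almost full if every strictly increasing sequence hits it. -/
def AlmostFull (A : Set ℕ) : Prop :=
  ∀ i : ℕ → ℕ, StrictMono i → ∃ n, i n ∈ A

/-- A colist is a descending chain of the relation `r` starting at `x`. -/
def IsDescChain (r : ℕ → ℕ → Prop) (x : ℕ) (l : Stream'.Seq ℕ) : Prop :=
  (∀ y, l.get? 0 = some y → r x y) ∧
  (∀ n a b, l.get? n = some a → l.get? (n + 1) = some b → r a b)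

/-- `r` is strongly normalizing at `x`: every descending chain starting at `x` is finite. -/
def SN (r : ℕ → ℕ → Prop) (x : ℕ) : Prop :=
  ∀ l : Stream'.Seq ℕ, IsDescChain r x l → l.Terminates

/-- `n` is antifounded wrt `r`: greatest fixed point of the one-step descent operator. -/
def af (r : ℕ → ℕ → Prop) (n : ℕ) : Prop :=
  ∃ Q : ℕ → Prop, Q n ∧ ∀ k, Q k → ∃ m, r k m ∧ Q m

/-- `atmost n s`: fewer than `n` red positions up to every position `m`. -/
def atmost (n : ℕ) (s : ℕ → Bool) : Prop :=
  ∀ m, ((Finset.range (m + 1)).filter (fun k => s k = true)).card < n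

/-- Iterates of the weak-until operator starting from the empty predicate. -/
def Fiter : ℕ → (ℕ → Bool) → Prop
  | 0 => fun _ => False
  | n + 1 => W (Fiter n)

/-- The ω-iterate of the weak-until operator. -/
def Fomega (s : ℕ → Bool) : Prop := ∃ n, Fiter n s

/-- The Lesser Principle of Omniscience. -/
def LPO : Prop := ∀ s : ℕ → Bool, (∃ n, s n = true) ∨ (∀ n, s n = false)

/-- Markov's Principle. -/
def MP : Prop := ∀ s : ℕ → Bool, ¬(∀ n, s n = false) → ∃ n, s n = true

/-- Noetherian sets of naturals. -/
inductive Noeth : Set ℕ → Prop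
  | intro : ∀ A : Set ℕ, (∀ x ∈ A, Noeth (A \ {x})) → Noeth A

/-!
A stream that is infinitely often red has red positions beyond every bound, so its set of red
positions is infinite; enumerating an infinite set of naturals injectively gives a
duplicate-free infinite colist over it, so no infinite set is streamless.
-/

lemma suff_suff (s : ℕ → Bool) (m n : ℕ) : suff (suff s m) n = suff s (m + n) := by
  funext k
  simp only [suff, Nat.add_assoc]

lemma U.exists_red {X : (ℕ → Bool) → Prop} {t : ℕ → Bool} (h : U X t) :
    ∃ n, t n = true ∧ X (suff t (n + 1)) := by
  induction h with
  | red t hred hX => exact ⟨0, hred, hX⟩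
  | blue t _ _ ih =>
    obtain ⟨n, hn, hX⟩ := ih
    refine ⟨n + 1, by simpa [suff, Nat.add_comm] using hn, ?_⟩
    rwa [suff_suff, Nat.add_comm 1] at hX

lemma rep.exists_red_ge {s : ℕ → Bool} (hs : rep s) (m : ℕ) : ∃ n, m ≤ n ∧ s n = true := by
  obtain ⟨P, hPs, hPU⟩ := hs
  induction m generalizing s with
  | zero =>
    obtain ⟨n, hn, -⟩ := (hPU s hPs).exists_red
    exact ⟨n, Nat.zero_le n, hn⟩
  | succ m ih =>
    obtain ⟨n₀, -, hP⟩ := (hPU s hPs).exists_red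
    obtain ⟨n₁, hn₁, hred⟩ := ih hP
    exact ⟨n₀ + 1 + n₁, by omega, hred⟩

lemma rep.reds_infinite {s : ℕ → Bool} (hs : rep s) : (Reds s).Infinite :=
  Set.infinite_of_forall_exists_gt fun m =>
    let ⟨n, hmn, hn⟩ := hs.exists_red_ge (m + 1)
    ⟨n, hn, hmn⟩

lemma dupFree_ofStream_of_injective {A : Set ℕ} {f : ℕ → ℕ} (hf : Function.Injective f)
    (hA : ∀ n, f n ∈ A) : DupFree (Stream'.Seq.ofStream f) A := by
  refine ⟨fun n x hx => ?_, fun m n x y hmn hx hy => ?_⟩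
  · cases hx
    exact hA n
  · cases hx
    cases hy
    exact hf.ne hmn

lemma Streamless.finite {A : Set ℕ} (hA : Streamless A) : A.Finite := by
  by_contra hinf
  have : Infinite A := Set.infinite_coe_iff.mpr hinf
  let e := Infinite.natEmbedding A
  obtain ⟨n, hn⟩ := hA _ (dupFree_ofStream_of_injective (f := fun n => (e n : ℕ))
    (Subtype.val_injective.comp e.injective) fun n => (e n).2)
  exact Option.some_ne_none _ hn

theorem stmt_13 : ∀ s : ℕ → Bool, Streamless (Reds s) → ¬ rep s :=
  fun _ hS hr => hr.reds_infinite hS.finite
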